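/- Let N ≥ 1 and for each i ∈ {1,…,N} let Aᵢ ∈ ℝ^{nᵢ×nᵢ}, Bᵢ ∈ ℝ^{nᵢ×mᵢ}, Cᵢ ∈ ℝ^{l×nᵢ}, Dᵢ ∈ ℝ^{l×mᵢ}, Eᵢ ∈ ℝ^{nᵢ×qᵢ}, Sᵢ ∈ ℝ^{qᵢ×qᵢ}; let S₀ ∈ ℝ^{n₀×n₀}, F₀ ∈ ℝ^{l×n₀}. Assume: (i) for each i there exist Xᵢ₁, Uᵢ₁ with Xᵢ₁Sᵢ = AᵢXᵢ₁ + BᵢUᵢ₁ + Eᵢ, 0 = CᵢXᵢ₁ + DᵢUᵢ₁, and Xᵢ₂, Uᵢ₂ with Xᵢ₂S₀ = AᵢXᵢ₂ + BᵢUᵢ₂, 0 = CᵢXᵢ₂ + DᵢUᵢ₂ − F₀; (ii) Kᵢ₁ with Aᵢ + BᵢKᵢ₁ Hurwitz, Kᵢ₂ = Uᵢ₁ − Kᵢ₁Xᵢ₁, Kᵢ₃ = Uᵢ₂ − Kᵢ₁Xᵢ₂; (iii) P ∈ ℝ^{n₀×n₀} symmetric positive definite with S₀ᵀP + PS₀ −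 2F₀ᵀF₀ negative definite, matrices H₁,…,H_κ ∈ ℝ^{N×N} symmetric positive definite with all eigenvalues ≥ λ̄ > 0, L₀ = −max{1/λ̄,1}·P⁻¹F₀ᵀ, and a switching signal σ : [0,∞) → {1,…,κ} constant on intervals [tⱼ, tⱼ₊₁) of a strictly increasing unbounded time sequence. Let r' = S₀r, and for each i let dᵢ' = Sᵢdᵢ, xᵢ' = Aᵢxᵢ + Bᵢuᵢ + Eᵢdᵢ, and uᵢ = Kᵢ₁xᵢ + Kᵢ₂dᵢ + Kᵢ₃ηᵢ, where the stacked observer error η̄ = (η₁ − r, …, η_N − r) is continuous, differentiable on each switching interval, and satisfies η̄' = (I_N ⊗ S₀ + H_{σ(t)} ⊗ (L₀F₀)) η̄. Then for every initial condition, eᵢ(t) = Cᵢxᵢ(t) + Dᵢuᵢ(t) − F₀ r(t) → 0 as t → ∞ for all i ∈ {1,…,N}. -/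

import Mathlib

/-!
With the gain `L₀ = -μ P⁻¹ F₀ᵀ` and `μ H_p ≥ I`, the matrix `I ⊗ P` is a common quadratic Lyapunov
function for every mode `I ⊗ S₀ + H_p ⊗ L₀F₀` of the observer error `η̄`: along each mode its
derivative is at most `-δ` times itself, with `δ` independent of `p`. Since `η̄` is continuous
across the switching instants, it decays exponentially.

For each agent the regulator equations turn `x̄ = x - X₁ d - X₂ r` into a solution of
`x̄' = (A + B K₁) x̄ + B K₃ (η - r)`, and the regulation error into
`(C + D K₁) x̄ + D K₃ (η - r)`. A Hurwitz system driven by a vanishing input has a vanishing state: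
by Cayley–Hamilton, after factoring the characteristic polynomial over `ℂ`, this reduces to scalar
equations `y' = a y + g` with `Re a < 0`, which variation of constants settles.
-/

open Matrix Filter Kronecker

/-- A real square matrix is Hurwitz if every eigenvalue of it, regarded as a
complex matrix, has strictly negative real part. -/
def IsHurwitz {ι : Type*} [Fintype ι] [DecidableEq ι] (M : Matrix ι ι ℝ) : Prop :=
  ∀ μ ∈ spectrum ℂ (M.map Complex.ofReal), μ.re < 0

open Topology

section ScalarDecay

variable {E : Type*} [NormedAddCommGroup E] [NormedSpace ℂ E]

lemma norm_le_of_hasDerivAt_smul_add {a : ℂ} (ha : a.re < 0) {y g : ℝ → E}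
    (hy : ∀ t, HasDerivAt y (a • y t + g t) t) {T c : ℝ} (hg : ∀ s ≥ T, ‖g s‖ ≤ c)
    {t : ℝ} (ht : T ≤ t) :
    ‖y t‖ ≤ Real.exp (a.re * (t - T)) * ‖y T‖ + c / -a.re := by
  set δ := -a.re with hδ
  have hδpos : 0 < δ := by linarith
  have hc : 0 ≤ c := (norm_nonneg _).trans (hg T le_rfl)
  have hexp_norm : ∀ z : ℂ, ∀ s : ℝ, ‖Complex.exp (z * (s - T))‖ = Real.exp (z.re * (s - T)) :=
    fun z s => by rw [Complex.norm_exp]; norm_cast; simp [Complex.mul_re]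
  -- variation of constants
  set w : ℝ → E := fun s => Complex.exp (-a * (s - T)) • y s
  have hw : ∀ s : ℝ, HasDerivAt w (Complex.exp (-a * (s - T)) • g s) s := by
    intro s
    have he : HasDerivAt (fun s : ℝ => Complex.exp (-a * (s - T)))
        (Complex.exp (-a * (s - T)) * -a) s := by
      simpa using ((((hasDerivAt_id s).sub_const T).ofReal_comp).const_mul (-a)).cexp
    refine (he.smul (hy s)).congr_deriv ?_
    rw [smul_add, smul_smul]
    module
  set B : ℝ → ℝ := fun s => ‖y T‖ + c / δ * (Real.exp (δ * (s - T)) - 1)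
  have hB : ∀ s, HasDerivAt B (c * Real.exp (δ * (s - T))) s := by
    intro s
    refine (((((hasDerivAt_id s).sub_const T).const_mul δ).exp.sub_const 1).const_mul (c / δ)
      |>.const_add ‖y T‖).congr_deriv ?_
    field_simp
    simp
  have hwt : ‖w t‖ ≤ B t := by
    refine image_norm_le_of_norm_deriv_right_le_deriv_boundary
      (fun s _ => (hw s).continuousAt.continuousWithinAt) (fun s _ => (hw s).hasDerivWithinAt)
      (by simp [w, B]) hB (fun s hs => ?_) ⟨ht, le_rfl⟩
    rw [norm_smul, hexp_norm, mul_comm]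
    simpa [δ] using mul_le_mul_of_nonneg_right (hg s hs.1) (Real.exp_pos _).le
  have hyt : y t = Complex.exp (a * (t - T)) • w t := by
    simp only [w, smul_smul, ← Complex.exp_add]
    simp
  calc ‖y t‖ = Real.exp (a.re * (t - T)) * ‖w t‖ := by rw [hyt, norm_smul, hexp_norm]
    _ ≤ Real.exp (a.re * (t - T)) * B t := by gcongr
    _ ≤ Real.exp (a.re * (t - T)) * ‖y T‖ + c / δ := by
      have h1 : Real.exp (a.re * (t - T)) * Real.exp (δ * (t - T)) = 1 := by
        rw [← Real.exp_add, hδ]; simp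
      have h2 : 0 < Real.exp (a.re * (t - T)) := Real.exp_pos _
      have h3 : 0 ≤ c / δ := by positivity
      simp only [B]
      nlinarith

lemma tendsto_zero_of_hasDerivAt_smul_add {a : ℂ} (ha : a.re < 0) {y g : ℝ → E}
    (hy : ∀ t, HasDerivAt y (a • y t + g t) t) (hg : Tendsto g atTop (𝓝 0)) :
    Tendsto y atTop (𝓝 0) := by
  refine Metric.tendsto_nhds.2 fun ε hε => ?_
  have hδ : 0 < -a.re := by linarith
  obtain ⟨T, hT⟩ := eventually_atTop.1 <| (tendsto_zero_iff_norm_tendsto_zero.1 hg).eventually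
    (ge_mem_nhds (by positivity : 0 < ε * -a.re / 2))
  have hfree : Tendsto (fun t => Real.exp (a.re * (t - T)) * ‖y T‖) atTop (𝓝 0) := by
    simpa [sub_eq_add_neg] using (Real.tendsto_exp_atBot.comp
      ((tendsto_id.atTop_add tendsto_const_nhds).const_mul_atTop_of_neg ha)).mul_const ‖y T‖
  filter_upwards [eventually_ge_atTop T, hfree.eventually (gt_mem_nhds (half_pos hε))]
    with t ht hsmall
  rw [dist_zero_right]
  calc ‖y t‖ ≤ Real.exp (a.re * (t - T)) * ‖y T‖ + ε * -a.re / 2 / -a.re :=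
        norm_le_of_hasDerivAt_smul_add ha hy hT ht
    _ = Real.exp (a.re * (t - T)) * ‖y T‖ + ε / 2 := by field_simp [ha.ne]
    _ < ε := by linarith

end ScalarDecay

section Hurwitz

variable {ι : Type*} [Fintype ι]

lemma HasDerivAt.matrix_mulVec {𝕜 : Type*} [RCLike 𝕜] {κ : Type*} (M : Matrix κ ι 𝕜)
    {f : ℝ → ι → 𝕜} {f' : ι → 𝕜} {t : ℝ} (hf : HasDerivAt f f' t) :
    HasDerivAt (fun s => M *ᵥ f s) (M *ᵥ f') t := by
  rw [hasDerivAt_pi] at hf ⊢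
  intro i
  simp only [mulVec, dotProduct]
  exact HasDerivAt.fun_sum fun j _ => (hf j).const_mul (M i j)

lemma Filter.Tendsto.matrix_mulVec_zero {α 𝕜 κ : Type*} [RCLike 𝕜] (M : Matrix κ ι 𝕜)
    {f : α → ι → 𝕜} {l : Filter α} (hf : Tendsto f l (𝓝 0)) :
    Tendsto (fun s => M *ᵥ f s) l (𝓝 0) :=
  ((continuous_const.matrix_mulVec continuous_id).tendsto' 0 _ (mulVec_zero M)).comp hf

open Polynomial in
lemma tendsto_zero_of_aeval_mulVec_eq_zero [DecidableEq ι] (M : Matrix ι ι ℂ) (s : Multiset ℂ)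
    (hs : ∀ a ∈ s, a.re < 0) {z g : ℝ → ι → ℂ} (hz : ∀ t, HasDerivAt z (M *ᵥ z t + g t) t)
    (hg : Tendsto g atTop (𝓝 0)) (hann : ∀ t, aeval M (s.map fun a => X - C a).prod *ᵥ z t = 0) :
    Tendsto z atTop (𝓝 0) := by
  induction s using Multiset.induction_on generalizing z g with
  | empty =>
    rw [show z = 0 from funext fun t => by simpa using hann t]
    exact tendsto_const_nhds
  | cons a s ih =>
    set N := M - a • 1
    have hN : aeval M (X - C a) = N := by simp [N, Algebra.algebraMap_eq_smul_one]
    have hNM : N * M = M * N := by simp [N, sub_mul, mul_sub]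
    -- `w = (M - a) z` solves the same kind of system with one linear factor fewer
    have hw : Tendsto (fun t => N *ᵥ z t) atTop (𝓝 0) := by
      refine ih (fun b hb => hs b (Multiset.mem_cons_of_mem hb)) (g := fun t => N *ᵥ g t)
        (fun t => ((hz t).matrix_mulVec N).congr_deriv ?_) (hg.matrix_mulVec_zero N) fun t => ?_
      · rw [mulVec_add, mulVec_mulVec, mulVec_mulVec, hNM]
      · rw [mulVec_mulVec, ← hN, ← map_mul, mul_comm, ← hann t]
        simp
    refine tendsto_zero_of_hasDerivAt_smul_add (hs a (Multiset.mem_cons_self a s))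
      (g := fun t => N *ᵥ z t + g t) (fun t => (hz t).congr_deriv ?_) (by simpa using hw.add hg)
    simp only [N, sub_mulVec, smul_mulVec, one_mulVec]
    abel

lemma IsHurwitz.tendsto_zero [DecidableEq ι] {M : Matrix ι ι ℝ} (hM : IsHurwitz M)
    {x g : ℝ → ι → ℝ} (hx : ∀ t, HasDerivAt x (M *ᵥ x t + g t) t) (hg : Tendsto g atTop (𝓝 0)) :
    Tendsto x atTop (𝓝 0) := by
  set Mc := M.map Complex.ofReal
  have hcast : ∀ v : ι → ℝ, Mc *ᵥ (fun i => (v i : ℂ)) = fun i => ((M *ᵥ v) i : ℂ) :=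
    fun v => funext fun i => (RingHom.map_mulVec Complex.ofRealHom M v i).symm
  have hz : Tendsto (fun t i => (x t i : ℂ)) atTop (𝓝 0) := by
    refine tendsto_zero_of_aeval_mulVec_eq_zero Mc Mc.charpoly.roots (fun a ha => hM a ?_)
      (g := fun t i => (g t i : ℂ)) (fun t => ?_) ?_ fun t => ?_
    · exact mem_spectrum_of_isRoot_charpoly (Polynomial.isRoot_of_mem_roots ha)
    · rw [hasDerivAt_pi]
      intro i
      refine (hasDerivAt_pi.1 (hx t) i).ofReal_comp.congr_deriv ?_
      simp [hcast]
    · exact tendsto_pi_nhds.2 fun i => by simpa using (tendsto_pi_nhds.1 hg i).ofReal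
    · rw [← (IsAlgClosed.splits Mc.charpoly).eq_prod_roots_of_monic (charpoly_monic Mc),
        aeval_self_charpoly, zero_mulVec]
  exact tendsto_pi_nhds.2 fun i => by
    simpa [Function.comp_def] using (Complex.continuous_re.tendsto 0).comp (tendsto_pi_nhds.1 hz i)

end Hurwitz

section Lyapunov

open Set

variable {ι : Type*} [Fintype ι]

lemma smul_dotProduct_mulVec_smul (Q : Matrix ι ι ℝ) (c : ℝ) (v : ι → ℝ) :
    (c • v) ⬝ᵥ Q *ᵥ (c • v) = c ^ 2 * (v ⬝ᵥ Q *ᵥ v) := by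
  simp only [mulVec_smul, smul_dotProduct, dotProduct_smul, smul_eq_mul]
  ring

lemma continuous_dotProduct_mulVec_self (Q : Matrix ι ι ℝ) :
    Continuous fun v : ι → ℝ => v ⬝ᵥ Q *ᵥ v :=
  continuous_id.dotProduct (continuous_const.matrix_mulVec continuous_id)

lemma Matrix.PosDef.exists_dotProduct_mulVec_le {R : Matrix ι ι ℝ} (hR : R.PosDef)
    (Q : Matrix ι ι ℝ) : ∃ C > 0, ∀ v, v ⬝ᵥ Q *ᵥ v ≤ C * (v ⬝ᵥ R *ᵥ v) := by
  have hRpos : ∀ v : ι → ℝ, v ≠ 0 → 0 < v ⬝ᵥ R *ᵥ v := fun v hv => by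
    simpa using hR.dotProduct_mulVec_pos hv
  -- the ratio of the two forms is invariant under scaling, so its bound on the sphere is global
  obtain ⟨C, hC⟩ := (isCompact_sphere (0 : ι → ℝ) 1).exists_bound_of_continuousOn
    ((continuous_dotProduct_mulVec_self Q).continuousOn.div
      (continuous_dotProduct_mulVec_self R).continuousOn fun v hv =>
        (hRpos v (ne_zero_of_mem_sphere one_ne_zero ⟨v, hv⟩)).ne')
  refine ⟨|C| + 1, by positivity, fun v => ?_⟩
  rcases eq_or_ne v 0 with rfl | hv
  · simp
  have hw : ‖v‖⁻¹ • v ∈ Metric.sphere (0 : ι → ℝ) 1 := by simp [norm_smul, hv]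
  have hratio : (‖v‖⁻¹ • v) ⬝ᵥ Q *ᵥ (‖v‖⁻¹ • v) / ((‖v‖⁻¹ • v) ⬝ᵥ R *ᵥ (‖v‖⁻¹ • v)) ≤ |C| :=
    (le_abs_self _).trans ((hC _ hw).trans (le_abs_self C))
  rw [smul_dotProduct_mulVec_smul, smul_dotProduct_mulVec_smul,
    mul_div_mul_left _ _ (by positivity), div_le_iff₀ (hRpos v hv)] at hratio
  nlinarith [hRpos v hv]

lemma hasDerivAt_dotProduct_mulVec (Q M : Matrix ι ι ℝ) {z : ℝ → ι → ℝ} {s : ℝ}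
    (hz : HasDerivAt z (M *ᵥ z s) s) :
    HasDerivAt (fun t => z t ⬝ᵥ Q *ᵥ z t) (z s ⬝ᵥ (Mᵀ * Q + Q * M) *ᵥ z s) s := by
  have hQz := hz.matrix_mulVec Q
  have h : HasDerivAt (fun t => z t ⬝ᵥ Q *ᵥ z t)
      (M *ᵥ z s ⬝ᵥ Q *ᵥ z s + z s ⬝ᵥ Q *ᵥ (M *ᵥ z s)) s := by
    simp only [dotProduct, ← Finset.sum_add_distrib]
    exact HasDerivAt.fun_sum fun i _ => (hasDerivAt_pi.1 hz i).mul (hasDerivAt_pi.1 hQz i)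
  refine h.congr_deriv ?_
  rw [add_mulVec, dotProduct_add, ← mulVec_mulVec, ← mulVec_mulVec, dotProduct_mulVec (z s) Mᵀ,
    vecMul_transpose]

lemma tendsto_zero_of_dotProduct_self {α : Type*} {l : Filter α} {z : α → ι → ℝ}
    (h : Tendsto (fun t => z t ⬝ᵥ z t) l (𝓝 0)) : Tendsto z l (𝓝 0) := by
  refine tendsto_pi_nhds.2 fun i => squeeze_zero_norm (fun t => ?_)
    ((Real.continuous_sqrt.tendsto' 0 0 Real.sqrt_zero).comp h)
  refine Real.abs_le_sqrt ?_
  simpa [dotProduct, sq] using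
    Finset.single_le_sum (f := fun j => z t j * z t j) (fun j _ => mul_self_nonneg _)
      (Finset.mem_univ i)

lemma antitoneOn_mul_exp_of_hasDerivAt {V V' : ℝ → ℝ} {δ a b : ℝ}
    (hV : ContinuousOn V (Icc a b))
    (hV' : ∀ s ∈ Ioo a b, HasDerivAt V (V' s) s ∧ V' s ≤ -δ * V s) :
    AntitoneOn (fun t => V t * Real.exp (δ * t)) (Icc a b) := by
  have hexp : ∀ s, HasDerivAt (fun t => Real.exp (δ * t)) (Real.exp (δ * s) * δ) s := fun s => by
    simpa using ((hasDerivAt_id s).const_mul δ).exp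
  refine antitoneOn_of_hasDerivWithinAt_nonpos (convex_Icc a b)
    (f' := fun s => V' s * Real.exp (δ * s) + V s * (Real.exp (δ * s) * δ))
    (hV.mul (by fun_prop)) (fun s hs => ?_) fun s hs => ?_
  · rw [interior_Icc] at hs
    exact ((hV' s hs).1.mul (hexp s)).hasDerivWithinAt
  · rw [interior_Icc] at hs
    nlinarith [mul_le_mul_of_nonneg_right (hV' s hs).2 (Real.exp_pos (δ * s)).le]

lemma le_mul_exp_of_piecewise_hasDerivAt {V V' : ℝ → ℝ} {δ : ℝ} {ts : ℕ → ℝ} (ht0 : ts 0 = 0)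
    (hts : Monotone ts) (htop : Tendsto ts atTop atTop) (hV : ContinuousOn V (Ici 0))
    (hV' : ∀ j, ∀ s ∈ Ioo (ts j) (ts (j + 1)), HasDerivAt V (V' s) s ∧ V' s ≤ -δ * V s)
    {t : ℝ} (ht : 0 ≤ t) : V t ≤ V 0 * Real.exp (-δ * t) := by
  set W := fun t => V t * Real.exp (δ * t)
  have hanti : ∀ j, AntitoneOn W (Icc (ts j) (ts (j + 1))) := fun j =>
    antitoneOn_mul_exp_of_hasDerivAt
      (hV.mono fun s hs => (ht0 ▸ hts (Nat.zero_le j)).trans hs.1) (hV' j)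
  have hnode : ∀ j, W (ts j) ≤ W 0 := by
    intro j
    induction j with
    | zero => rw [ht0]
    | succ j ih =>
      have hj := hts j.le_succ
      exact (hanti j ⟨le_rfl, hj⟩ ⟨hj, le_rfl⟩ hj).trans ih
  obtain ⟨N, hN⟩ := (htop.eventually_gt_atTop t).exists
  obtain ⟨j, -, hj⟩ := mem_iUnion₂.1 (Ico_subset_biUnion_Ico N ts ⟨ht0 ▸ ht, hN⟩)
  have hWt : W t ≤ V 0 := by
    simpa [W] using (hanti j ⟨le_rfl, hj.1.trans hj.2.le⟩ (Ico_subset_Icc_self hj) hj.1).trans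
      (hnode j)
  calc V t = W t * Real.exp (-δ * t) := by simp [W, mul_assoc, ← Real.exp_add]
    _ ≤ V 0 * Real.exp (-δ * t) := by gcongr

theorem tendsto_zero_of_common_quadratic_lyapunov {Q : Matrix ι ι ℝ} (hQ : Q.PosDef) {δ : ℝ}
    (hδ : 0 < δ) {M : ℝ → Matrix ι ι ℝ}
    (hM : ∀ s v, v ⬝ᵥ ((M s)ᵀ * Q + Q * M s) *ᵥ v ≤ -δ * (v ⬝ᵥ Q *ᵥ v))
    {ts : ℕ → ℝ} (ht0 : ts 0 = 0) (hts : Monotone ts) (htop : Tendsto ts atTop atTop)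
    {z : ℝ → ι → ℝ} (hzc : ContinuousOn z (Ici 0))
    (hz : ∀ j, ∀ s ∈ Ioo (ts j) (ts (j + 1)), HasDerivAt z (M s *ᵥ z s) s) :
    Tendsto z atTop (𝓝 0) := by
  set V := fun t => z t ⬝ᵥ Q *ᵥ z t
  have hV : ∀ t ≥ 0, V t ≤ V 0 * Real.exp (-δ * t) := fun t ht =>
    le_mul_exp_of_piecewise_hasDerivAt ht0 hts htop
      ((continuous_dotProduct_mulVec_self Q).comp_continuousOn hzc)
      (fun j s hs => ⟨hasDerivAt_dotProduct_mulVec Q (M s) (hz j s hs), hM s (z s)⟩) ht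
  classical
  obtain ⟨C, hCpos, hC⟩ := hQ.exists_dotProduct_mulVec_le 1
  have hdecay : Tendsto (fun t => C * (V 0 * Real.exp (-δ * t))) atTop (𝓝 0) := by
    simpa using ((Real.tendsto_exp_atBot.comp
      (tendsto_id.const_mul_atTop_of_neg (neg_lt_zero.2 hδ))).const_mul (V 0)).const_mul C
  refine tendsto_zero_of_dotProduct_self (squeeze_zero' (Eventually.of_forall fun t =>
    Finset.sum_nonneg fun i _ => mul_self_nonneg (z t i)) ?_ hdecay)
  filter_upwards [eventually_ge_atTop 0] with t ht
  have := hC (z t)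
  rw [one_mulVec] at this
  exact this.trans (mul_le_mul_of_nonneg_left (hV t ht) hCpos.le)

end Lyapunov

section Observer

variable {m n o : Type*} [Fintype m] [DecidableEq m] [Fintype n] [Fintype o]

lemma kronecker_transpose_mul_add {R : Type*} [CommRing R] {A : Matrix m m R} (hA : Aᵀ = A)
    (X P : Matrix n n R) :
    (A ⊗ₖ X)ᵀ * (1 ⊗ₖ P) + (1 ⊗ₖ P) * (A ⊗ₖ X) = A ⊗ₖ (Xᵀ * P + P * X) := by
  rw [← kroneckerMap_transpose, hA, ← mul_kronecker_mul, ← mul_kronecker_mul, Matrix.mul_one,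
    Matrix.one_mul, ← kronecker_add]

lemma exists_observer_lyapunov_decay [DecidableEq n] {S₀ P : Matrix n n ℝ} {F₀ : Matrix o n ℝ}
    {L₀ : Matrix n o ℝ} (hP : P.PosDef) (hLyap : (-(S₀ᵀ * P + P * S₀ - (2:ℝ) • (F₀ᵀ * F₀))).PosDef)
    {lb : ℝ} (hlb : 0 < lb) (hL₀ : L₀ = -(max (1/lb) 1) • (P⁻¹ * F₀ᵀ)) :
    ∃ δ > 0, ∀ H : Matrix m m ℝ, (H - lb • 1).PosSemidef → ∀ v,
      v ⬝ᵥ ((1 ⊗ₖ S₀ + H ⊗ₖ (L₀ * F₀))ᵀ * (1 ⊗ₖ P) + (1 ⊗ₖ P) * (1 ⊗ₖ S₀ + H ⊗ₖ (L₀ * F₀)))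
        *ᵥ v ≤ -δ * (v ⬝ᵥ (1 ⊗ₖ P) *ᵥ v) := by
  set μ := max (1/lb) 1
  set G := F₀ᵀ * F₀
  set R := -(S₀ᵀ * P + P * S₀ - (2:ℝ) • G)
  have hPL : P * (L₀ * F₀) = (-μ) • G := by
    rw [hL₀, Matrix.smul_mul, Matrix.mul_smul, ← Matrix.mul_assoc, ← Matrix.mul_assoc,
      Matrix.mul_nonsing_inv _ ((isUnit_iff_isUnit_det P).1 hP.isUnit), Matrix.one_mul]
  have hLP : (L₀ * F₀)ᵀ * P = (-μ) • G := by
    simpa [transpose_mul, (isHermitian_iff_isSymm.1 hP.isHermitian).eq, G] using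
      congrArg transpose hPL
  have hμ : 1 ≤ μ * lb := by
    have := mul_le_mul_of_nonneg_right (le_max_left (1/lb) 1) hlb.le
    rwa [one_div_mul_cancel hlb.ne'] at this
  have hG : G.PosSemidef := by
    simpa [G] using posSemidef_conjTranspose_mul_self F₀
  obtain ⟨C, hCpos, hC⟩ :=
    (PosDef.one (n := m)).kronecker hLyap |>.exists_dotProduct_mulVec_le (1 ⊗ₖ P)
  refine ⟨C⁻¹, inv_pos.2 hCpos, fun H hH v => ?_⟩
  have hHsymm : Hᵀ = H := by
    simpa using (isHermitian_iff_isSymm.1 hH.isHermitian).eq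
  have hsplit : (1 ⊗ₖ S₀ + H ⊗ₖ (L₀ * F₀))ᵀ * (1 ⊗ₖ P) + (1 ⊗ₖ P) * (1 ⊗ₖ S₀ + H ⊗ₖ (L₀ * F₀))
      = 1 ⊗ₖ (S₀ᵀ * P + P * S₀) + (-2 * μ) • (H ⊗ₖ G) := by
    rw [transpose_add, Matrix.add_mul, Matrix.mul_add, add_add_add_comm,
      kronecker_transpose_mul_add transpose_one, kronecker_transpose_mul_add hHsymm, hLP, hPL,
      ← add_smul, kronecker_smul]
    ring_nf
  have hR : 1 ⊗ₖ (S₀ᵀ * P + P * S₀) + 1 ⊗ₖ R = (2:ℝ) • ((1 : Matrix m m ℝ) ⊗ₖ G) := by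
    rw [← kronecker_add, ← kronecker_smul]
    congr 1
    simp only [R]
    abel
  have hHG : 0 ≤ v ⬝ᵥ (H ⊗ₖ G) *ᵥ v - lb * (v ⬝ᵥ ((1 : Matrix m m ℝ) ⊗ₖ G) *ᵥ v) := by
    have hsub : (H - lb • 1) ⊗ₖ G = H ⊗ₖ G - lb • ((1 : Matrix m m ℝ) ⊗ₖ G) := by
      ext; simp [sub_mul, mul_assoc]
    simpa [hsub, sub_mulVec, smul_mulVec] using (hH.kronecker hG).dotProduct_mulVec_nonneg v
  have h1G : 0 ≤ v ⬝ᵥ ((1 : Matrix m m ℝ) ⊗ₖ G) *ᵥ v := by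
    simpa using (PosSemidef.one.kronecker hG).dotProduct_mulVec_nonneg v
  have hform := congrArg (fun X => v ⬝ᵥ X *ᵥ v) hR
  simp only [add_mulVec, smul_mulVec, dotProduct_add, dotProduct_smul, smul_eq_mul] at hform
  rw [hsplit, add_mulVec, smul_mulVec, dotProduct_add, dotProduct_smul, smul_eq_mul]
  have hCv : C⁻¹ * (v ⬝ᵥ (1 ⊗ₖ P) *ᵥ v) ≤ v ⬝ᵥ (1 ⊗ₖ R) *ᵥ v := by
    rw [inv_mul_le_iff₀ hCpos]
    exact hC v
  nlinarith [mul_le_mul_of_nonneg_right hμ h1G,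
    mul_nonneg (zero_le_one.trans (le_max_right (1/lb) 1)) hHG]

end Observer

section Regulation

variable {n m q k o : Type*} [Fintype n] [DecidableEq n] [Fintype m] [Fintype q] [Fintype k]

theorem tendsto_regulation_error {A : Matrix n n ℝ} {B : Matrix n m ℝ} {C : Matrix o n ℝ}
    {D : Matrix o m ℝ} {E : Matrix n q ℝ} {S : Matrix q q ℝ} {S₀ : Matrix k k ℝ}
    {F₀ : Matrix o k ℝ} {X₁ : Matrix n q ℝ} {U₁ : Matrix m q ℝ} {X₂ : Matrix n k ℝ}
    {U₂ : Matrix m k ℝ} {K₁ : Matrix m n ℝ}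
    (hreg11 : X₁ * S = A * X₁ + B * U₁ + E) (hreg12 : C * X₁ + D * U₁ = 0)
    (hreg21 : X₂ * S₀ = A * X₂ + B * U₂) (hreg22 : C * X₂ + D * U₂ = F₀)
    (hK₁ : IsHurwitz (A + B * K₁))
    {r : ℝ → k → ℝ} (hr : ∀ t, HasDerivAt r (S₀ *ᵥ r t) t)
    {d : ℝ → q → ℝ} (hd : ∀ t, HasDerivAt d (S *ᵥ d t) t)
    {x : ℝ → n → ℝ} {u : ℝ → m → ℝ} (hx : ∀ t, HasDerivAt x (A *ᵥ x t + B *ᵥ u t + E *ᵥ d t) t)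
    {η : ℝ → k → ℝ}
    (hu : ∀ t, u t = K₁ *ᵥ x t + (U₁ - K₁ * X₁) *ᵥ d t + (U₂ - K₁ * X₂) *ᵥ η t)
    (hη : Tendsto (fun t => η t - r t) atTop (𝓝 0)) :
    Tendsto (fun t => C *ᵥ x t + D *ᵥ u t - F₀ *ᵥ r t) atTop (𝓝 0) := by
  set xb := fun t => x t - X₁ *ᵥ d t - X₂ *ᵥ r t
  have hX₁ : (A + B * K₁) * X₁ + B * (U₁ - K₁ * X₁) + E = X₁ * S := by
    rw [hreg11]; simp only [Matrix.add_mul, Matrix.mul_sub, Matrix.mul_assoc]; abel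
  have hX₂ : (A + B * K₁) * X₂ + B * (U₂ - K₁ * X₂) = X₂ * S₀ := by
    rw [hreg21]; simp only [Matrix.add_mul, Matrix.mul_sub, Matrix.mul_assoc]; abel
  have hC₁ : (C + D * K₁) * X₁ + D * (U₁ - K₁ * X₁) = 0 := by
    rw [← hreg12]; simp only [Matrix.add_mul, Matrix.mul_sub, Matrix.mul_assoc]; abel
  have hC₂ : (C + D * K₁) * X₂ + D * (U₂ - K₁ * X₂) = F₀ := by
    rw [← hreg22]; simp only [Matrix.add_mul, Matrix.mul_sub, Matrix.mul_assoc]; abel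
  have hxb : ∀ t, HasDerivAt xb
      ((A + B * K₁) *ᵥ xb t + (B * (U₂ - K₁ * X₂)) *ᵥ (η t - r t)) t := by
    intro t
    refine (((hx t).sub ((hd t).matrix_mulVec X₁)).sub ((hr t).matrix_mulVec X₂)).congr_deriv ?_
    rw [mulVec_mulVec, mulVec_mulVec, ← hX₁, ← hX₂, hu t]
    simp only [xb, add_mulVec, sub_mulVec, mulVec_add, mulVec_sub, ← mulVec_mulVec, Matrix.add_mul]
    abel
  have herr : ∀ t, C *ᵥ x t + D *ᵥ u t - F₀ *ᵥ r t
      = (C + D * K₁) *ᵥ xb t + (D * (U₂ - K₁ * X₂)) *ᵥ (η t - r t) := by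
    intro t
    have hX₁d := congrArg (· *ᵥ d t) hC₁
    rw [← hC₂, hu t]
    simp only [xb, add_mulVec, sub_mulVec, mulVec_add, mulVec_sub, ← mulVec_mulVec,
      Matrix.add_mul, zero_mulVec] at hX₁d ⊢
    linear_combination (norm := module) hX₁d
  simpa [herr] using ((hK₁.tendsto_zero hxb (hη.matrix_mulVec_zero _)).matrix_mulVec_zero
    (C + D * K₁)).add (hη.matrix_mulVec_zero (D * (U₂ - K₁ * X₂)))

end Regulation

theorem stmt15_general {N n₀ l κ : ℕ}
    (n m q : Fin N → ℕ)
    (A : ∀ i, Matrix (Fin (n i)) (Fin (n i)) ℝ)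
    (B : ∀ i, Matrix (Fin (n i)) (Fin (m i)) ℝ)
    (C : ∀ i, Matrix (Fin l) (Fin (n i)) ℝ)
    (D : ∀ i, Matrix (Fin l) (Fin (m i)) ℝ)
    (E : ∀ i, Matrix (Fin (n i)) (Fin (q i)) ℝ)
    (S : ∀ i, Matrix (Fin (q i)) (Fin (q i)) ℝ)
    (S₀ : Matrix (Fin n₀) (Fin n₀) ℝ) (F₀ : Matrix (Fin l) (Fin n₀) ℝ)
    -- (i) regulator equations
    (X₁ : ∀ i, Matrix (Fin (n i)) (Fin (q i)) ℝ)
    (U₁ : ∀ i, Matrix (Fin (m i)) (Fin (q i)) ℝ)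
    (hreg11 : ∀ i, X₁ i * S i = A i * X₁ i + B i * U₁ i + E i)
    (hreg12 : ∀ i, C i * X₁ i + D i * U₁ i = 0)
    (X₂ : ∀ i, Matrix (Fin (n i)) (Fin n₀) ℝ)
    (U₂ : ∀ i, Matrix (Fin (m i)) (Fin n₀) ℝ)
    (hreg21 : ∀ i, X₂ i * S₀ = A i * X₂ i + B i * U₂ i)
    (hreg22 : ∀ i, C i * X₂ i + D i * U₂ i = F₀)
    -- (ii) stabilizing feedback gains
    (K₁ : ∀ i, Matrix (Fin (m i)) (Fin (n i)) ℝ)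
    (hK₁ : ∀ i, IsHurwitz (A i + B i * K₁ i))
    (K₂ : ∀ i, Matrix (Fin (m i)) (Fin (q i)) ℝ) (hK₂ : ∀ i, K₂ i = U₁ i - K₁ i * X₁ i)
    (K₃ : ∀ i, Matrix (Fin (m i)) (Fin n₀) ℝ) (hK₃ : ∀ i, K₃ i = U₂ i - K₁ i * X₂ i)
    -- (iii) common Lyapunov matrix, graph matrices, observer gain and switching signal
    (P : Matrix (Fin n₀) (Fin n₀) ℝ) (hP : P.PosDef)
    (hLyap : (-(S₀ᵀ * P + P * S₀ - (2:ℝ) • (F₀ᵀ * F₀))).PosDef)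
    (H : Fin κ → Matrix (Fin N) (Fin N) ℝ)
    (lb : ℝ) (hlb : 0 < lb) (heig : ∀ p, (H p - lb • 1).PosSemidef)
    (L₀ : Matrix (Fin n₀) (Fin l) ℝ) (hL₀ : L₀ = -(max (1/lb) 1) • (P⁻¹ * F₀ᵀ))
    (ts : ℕ → ℝ) (ht0 : ts 0 = 0) (htmono : StrictMono ts)
    (htlim : Tendsto ts atTop atTop)
    (σ : ℝ → Fin κ)
    -- leader, disturbances and plants
    (r : ℝ → Fin n₀ → ℝ) (hr : ∀ t, HasDerivAt r (S₀.mulVec (r t)) t)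
    (d : ∀ i, ℝ → Fin (q i) → ℝ)
    (hd : ∀ i t, HasDerivAt (d i) ((S i).mulVec (d i t)) t)
    (x : ∀ i, ℝ → Fin (n i) → ℝ) (u : ∀ i, ℝ → Fin (m i) → ℝ)
    (hx : ∀ i t, HasDerivAt (x i)
      ((A i).mulVec (x i t) + (B i).mulVec (u i t) + (E i).mulVec (d i t)) t)
    -- controls and distributed observer
    (η : Fin N → ℝ → Fin n₀ → ℝ)
    (hu : ∀ i t, u i t = (K₁ i).mulVec (x i t) + (K₂ i).mulVec (d i t)
      + (K₃ i).mulVec (η i t))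
    (ηbar : ℝ → Fin N × Fin n₀ → ℝ)
    (hηbar : ∀ i t j, ηbar t (i, j) = η i t j - r t j)
    (hηc : ContinuousOn ηbar (Set.Ici 0))
    (hηd : ∀ j, ∀ s ∈ Set.Ioo (ts j) (ts (j+1)),
      HasDerivAt ηbar
        ((((1 : Matrix (Fin N) (Fin N) ℝ) ⊗ₖ S₀) + (H (σ s)) ⊗ₖ (L₀ * F₀)).mulVec (ηbar s)) s) :
    ∀ i, Tendsto (fun t => (C i).mulVec (x i t) + (D i).mulVec (u i t) - F₀.mulVec (r t))
      atTop (nhds 0) := by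
  obtain ⟨δ, hδ, hdecay⟩ := exists_observer_lyapunov_decay (m := Fin N) hP hLyap hlb hL₀
  have hηbar0 : Tendsto ηbar atTop (𝓝 0) :=
    tendsto_zero_of_common_quadratic_lyapunov (PosDef.one.kronecker hP) hδ
      (fun s => hdecay (H (σ s)) (heig (σ s))) ht0 htmono.monotone htlim hηc hηd
  intro i
  have hηi : Tendsto (fun t => η i t - r t) atTop (𝓝 0) :=
    tendsto_pi_nhds.2 fun j => by simpa [hηbar] using tendsto_pi_nhds.1 hηbar0 (i, j)
  exact tendsto_regulation_error (hreg11 i) (hreg12 i) (hreg21 i) (hreg22 i) (hK₁ i) hr (hd i)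
    (hx i) (fun t => by rw [hu i t, hK₂ i, hK₃ i]) hηi

theorem stmt15 {N n₀ l κ : ℕ} (hN : 1 ≤ N)
    (n m q : Fin N → ℕ)
    (A : ∀ i, Matrix (Fin (n i)) (Fin (n i)) ℝ)
    (B : ∀ i, Matrix (Fin (n i)) (Fin (m i)) ℝ)
    (C : ∀ i, Matrix (Fin l) (Fin (n i)) ℝ)
    (D : ∀ i, Matrix (Fin l) (Fin (m i)) ℝ)
    (E : ∀ i, Matrix (Fin (n i)) (Fin (q i)) ℝ)
    (S : ∀ i, Matrix (Fin (q i)) (Fin (q i)) ℝ)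
    (S₀ : Matrix (Fin n₀) (Fin n₀) ℝ) (F₀ : Matrix (Fin l) (Fin n₀) ℝ)
    -- (i) regulator equations
    (X₁ : ∀ i, Matrix (Fin (n i)) (Fin (q i)) ℝ)
    (U₁ : ∀ i, Matrix (Fin (m i)) (Fin (q i)) ℝ)
    (hreg11 : ∀ i, X₁ i * S i = A i * X₁ i + B i * U₁ i + E i)
    (hreg12 : ∀ i, C i * X₁ i + D i * U₁ i = 0)
    (X₂ : ∀ i, Matrix (Fin (n i)) (Fin n₀) ℝ)
    (U₂ : ∀ i, Matrix (Fin (m i)) (Fin n₀) ℝ)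
    (hreg21 : ∀ i, X₂ i * S₀ = A i * X₂ i + B i * U₂ i)
    (hreg22 : ∀ i, C i * X₂ i + D i * U₂ i = F₀)
    -- (ii) stabilizing feedback gains
    (K₁ : ∀ i, Matrix (Fin (m i)) (Fin (n i)) ℝ)
    (hK₁ : ∀ i, IsHurwitz (A i + B i * K₁ i))
    (K₂ : ∀ i, Matrix (Fin (m i)) (Fin (q i)) ℝ) (hK₂ : ∀ i, K₂ i = U₁ i - K₁ i * X₁ i)
    (K₃ : ∀ i, Matrix (Fin (m i)) (Fin n₀) ℝ) (hK₃ : ∀ i, K₃ i = U₂ i - K₁ i * X₂ i)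
    -- (iii) common Lyapunov matrix, graph matrices, observer gain and switching signal
    (P : Matrix (Fin n₀) (Fin n₀) ℝ) (hP : P.PosDef)
    (hLyap : (-(S₀ᵀ * P + P * S₀ - (2:ℝ) • (F₀ᵀ * F₀))).PosDef)
    (H : Fin κ → Matrix (Fin N) (Fin N) ℝ) (hH : ∀ p, (H p).PosDef)
    (lb : ℝ) (hlb : 0 < lb) (heig : ∀ p, (H p - lb • 1).PosSemidef)
    (L₀ : Matrix (Fin n₀) (Fin l) ℝ) (hL₀ : L₀ = -(max (1/lb) 1) • (P⁻¹ * F₀ᵀ))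
    (ts : ℕ → ℝ) (ht0 : ts 0 = 0) (htmono : StrictMono ts)
    (htlim : Tendsto ts atTop atTop)
    (σ : ℝ → Fin κ) (hσ : ∀ j, ∀ s ∈ Set.Ico (ts j) (ts (j+1)), σ s = σ (ts j))
    -- leader, disturbances and plants
    (r : ℝ → Fin n₀ → ℝ) (hr : ∀ t, HasDerivAt r (S₀.mulVec (r t)) t)
    (d : ∀ i, ℝ → Fin (q i) → ℝ)
    (hd : ∀ i t, HasDerivAt (d i) ((S i).mulVec (d i t)) t)
    (x : ∀ i, ℝ → Fin (n i) → ℝ) (u : ∀ i, ℝ → Fin (m i) → ℝ)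
    (hx : ∀ i t, HasDerivAt (x i)
      ((A i).mulVec (x i t) + (B i).mulVec (u i t) + (E i).mulVec (d i t)) t)
    -- controls and distributed observer
    (η : Fin N → ℝ → Fin n₀ → ℝ)
    (hu : ∀ i t, u i t = (K₁ i).mulVec (x i t) + (K₂ i).mulVec (d i t)
      + (K₃ i).mulVec (η i t))
    (ηbar : ℝ → Fin N × Fin n₀ → ℝ)
    (hηbar : ∀ i t j, ηbar t (i, j) = η i t j - r t j)
    (hηc : ContinuousOn ηbar (Set.Ici 0))
    (hηd : ∀ j, ∀ s ∈ Set.Ioo (ts j) (ts (j+1)),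
      HasDerivAt ηbar
        ((((1 : Matrix (Fin N) (Fin N) ℝ) ⊗ₖ S₀) + (H (σ s)) ⊗ₖ (L₀ * F₀)).mulVec (ηbar s)) s) :
    ∀ i, Tendsto (fun t => (C i).mulVec (x i t) + (D i).mulVec (u i t) - F₀.mulVec (r t))
      atTop (nhds 0) :=
  stmt15_general n m q A B C D E S S₀ F₀ X₁ U₁ hreg11 hreg12 X₂ U₂ hreg21 hreg22 K₁ hK₁ K₂ hK₂ K₃
    hK₃ P hP hLyap H lb hlb heig L₀ hL₀ ts ht0 htmono htlim σ r hr d hd x u hx η hu ηbar hηbar hηc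
    hηd
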